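/- arXiv:1501.01072 — 3 statements merged into one kernel-verified Lean document; each statement's English description precedes it below -/
import Mathlib

section
/- Let H be a real Hilbert space, a : H × H → ℝ a continuous coercive symmetric bilinear form, f ∈ H, and K ⊆ H a nonempty closed convex set. Then there exists a unique u ∈ K such that a(u, v - u) ≥ ⟨f, v - u⟩ for all v ∈ K. -/
open RealInnerProductSpace

/-! Stampacchia's argument. Let `A` be the operator with `⟪A u, v⟫ = a u v` and `P` the metric
projection onto `K`, characterised by `⟪x - P x, w - P x⟫ ≤ 0` for `w ∈ K`. For `ρ > 0`, a point `u`
solves the variational inequality iff `u = P (u - ρ • (A u - f))`. Coercivity makes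
`1 - ρ • A` a strict contraction for small `ρ > 0`, and `P` is `1`-Lipschitz, so Banach's fixed
point theorem gives a solution. Uniqueness: subtracting the inequalities for two solutions `u, u'`
yields `a (u - u') (u - u') ≤ 0`. -/

section VariationalInequality

variable {E : Type*} [NormedAddCommGroup E] [InnerProductSpace ℝ E] {K : Set E}

theorem exists_mem_forall_inner_sub_nonpos (hne : K.Nonempty) (hcomplete : IsComplete K)
    (hconv : Convex ℝ K) (x : E) : ∃ y ∈ K, ∀ w ∈ K, ⟪x - y, w - y⟫ ≤ 0 := by
  obtain ⟨y, hyK, hy⟩ := exists_norm_eq_iInf_of_complete_convex hne hcomplete hconv x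
  exact ⟨y, hyK, (norm_eq_iInf_iff_real_inner_le_zero hconv hyK).1 hy⟩

theorem lipschitzWith_one_of_forall_inner_sub_nonpos {P : E → E} (hPK : ∀ x, P x ∈ K)
    (hP : ∀ x, ∀ w ∈ K, ⟪x - P x, w - P x⟫ ≤ 0) : LipschitzWith 1 P := by
  refine LipschitzWith.of_dist_le_mul fun x y => ?_
  rw [dist_eq_norm, dist_eq_norm, NNReal.coe_one, one_mul]
  have hx := hP x (P y) (hPK y)
  have hy := hP y (P x) (hPK x)
  have hmono : ‖P x - P y‖ ^ 2 ≤ ⟪x - y, P x - P y⟫ :=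
    calc ‖P x - P y‖ ^ 2
        ≤ ‖P x - P y‖ ^ 2 - ⟪x - P x, P y - P x⟫ - ⟪y - P y, P x - P y⟫ := by linarith
      _ = ⟪x - y, P x - P y⟫ := by
        rw [← real_inner_self_eq_norm_sq, ← neg_sub (P x) (P y), inner_neg_right, sub_neg_eq_add,
          ← inner_add_left, ← inner_sub_left]
        congr 1
        abel
  nlinarith [real_inner_le_norm (x - y) (P x - P y), norm_nonneg (P x - P y),
    norm_nonneg (x - y)]

theorem norm_sub_smul_sq_le {z g : E} {c M : ℝ} (hc : 0 ≤ c) (hM : 0 < M)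
    (hgz : c * ‖z‖ ^ 2 ≤ ⟪g, z⟫) (hg : ‖g‖ ≤ M * ‖z‖) :
    ‖z - (c / M ^ 2) • g‖ ^ 2 ≤ (1 - (c / M) ^ 2) * ‖z‖ ^ 2 := by
  have hρ : 0 ≤ c / M ^ 2 := by positivity
  have hg2 : ‖g‖ ^ 2 ≤ (M * ‖z‖) ^ 2 := pow_le_pow_left₀ (norm_nonneg g) hg 2
  calc ‖z - (c / M ^ 2) • g‖ ^ 2
      = ‖z‖ ^ 2 - 2 * (c / M ^ 2) * ⟪g, z⟫ + (c / M ^ 2) ^ 2 * ‖g‖ ^ 2 := by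
        rw [norm_sub_sq_real, real_inner_smul_right, norm_smul, Real.norm_of_nonneg hρ,
          real_inner_comm]
        ring
    _ ≤ ‖z‖ ^ 2 - 2 * (c / M ^ 2) * (c * ‖z‖ ^ 2) + (c / M ^ 2) ^ 2 * (M * ‖z‖) ^ 2 := by
        gcongr
    _ = (1 - (c / M) ^ 2) * ‖z‖ ^ 2 := by
        field_simp
        ring

theorem exists_pos_norm_one_sub_smul_lt_one {A : E →L[ℝ] E} {c : ℝ} (hc : 0 < c)
    (hA : ∀ z, c * ‖z‖ * ‖z‖ ≤ ⟪A z, z⟫) : ∃ ρ : ℝ, 0 < ρ ∧ ‖1 - ρ • A‖ < 1 := by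
  -- `max` with `c` keeps `M > 0` when `E` is trivial.
  set M := max ‖A‖ c
  have hM : 0 < M := lt_max_of_lt_right hc
  refine ⟨c / M ^ 2, by positivity, ?_⟩
  calc ‖1 - (c / M ^ 2) • A‖ ≤ √(1 - (c / M) ^ 2) :=
        ContinuousLinearMap.opNorm_le_bound _ (Real.sqrt_nonneg _) fun z => ?_
    _ < 1 := (Real.sqrt_lt' one_pos).2 ?_
  · have hz := norm_sub_smul_sq_le hc.le hM (g := A z) (by rw [sq, ← mul_assoc]; exact hA z)
      ((A.le_opNorm z).trans (by gcongr; exact le_max_left _ _))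
    rw [← Real.sqrt_sq (norm_nonneg z), ← Real.sqrt_mul' _ (sq_nonneg _)]
    exact Real.le_sqrt_of_sq_le (by simpa using hz)
  · have : 0 < (c / M) ^ 2 := by positivity
    linarith

theorem IsCoercive.eq_of_forall_inner_le {B : E →L[ℝ] E →L[ℝ] ℝ} (hB : IsCoercive B)
    {f u u' : E} (hu : u ∈ K) (hu' : u' ∈ K)
    (h : ∀ v ∈ K, ⟪f, v - u⟫ ≤ B u (v - u)) (h' : ∀ v ∈ K, ⟪f, v - u'⟫ ≤ B u' (v - u')) :
    u = u' := by
  obtain ⟨c, hc, hcoer⟩ := hB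
  have hneg : B (u - u') (u - u') ≤ 0 :=
    calc B (u - u') (u - u') = -B u (u' - u) - B u' (u - u') := by
          simp only [map_sub, sub_apply]; ring
      _ ≤ -⟪f, u' - u⟫ - ⟪f, u - u'⟫ := by linarith [h u' hu', h' u hu]
      _ = 0 := by rw [← neg_sub u u', inner_neg_right]; ring
  have : ‖u - u'‖ ≤ 0 := by
    by_contra! hpos
    linarith [(hcoer _).trans hneg, mul_pos (mul_pos hc hpos) hpos]
  rwa [norm_le_zero_iff, sub_eq_zero] at this

theorem IsCoercive.existsUnique_variationalInequality [CompleteSpace E]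
    {B : E →L[ℝ] E →L[ℝ] ℝ} (hB : IsCoercive B) (f : E) (hne : K.Nonempty)
    (hclosed : IsClosed K) (hconv : Convex ℝ K) :
    ∃! u, u ∈ K ∧ ∀ v ∈ K, ⟪f, v - u⟫ ≤ B u (v - u) := by
  set A := InnerProductSpace.continuousLinearMapOfBilin (𝕜 := ℝ) B
  have hA : ∀ v w, ⟪A v, w⟫ = B v w := InnerProductSpace.continuousLinearMapOfBilin_apply B
  obtain ⟨c, hc, hcoer⟩ := id hB
  obtain ⟨ρ, hρ, hcontr⟩ :=
    exists_pos_norm_one_sub_smul_lt_one (A := A) hc fun z => (hA z z).symm ▸ hcoer z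
  choose P hPK hP using exists_mem_forall_inner_sub_nonpos hne hclosed.isComplete hconv
  set T : E → E := fun x => P ((1 - ρ • A) x + ρ • f)
  have hT : ContractingWith ‖1 - ρ • A‖₊ T := by
    refine ⟨by exact_mod_cast hcontr, ?_⟩
    have hL := ((lipschitzWith_one_of_forall_inner_sub_nonpos hPK hP).comp
      (isometry_add_right (ρ • f)).lipschitz).comp (1 - ρ • A).lipschitz
    rw [one_mul, one_mul] at hL
    exact hL
  have : Nonempty E := ⟨hne.some⟩
  obtain ⟨u, hu⟩ : ∃ u, T u = u := ⟨_, hT.fixedPoint_isFixedPt⟩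
  have huK : u ∈ K := hu ▸ hPK _
  have hVI : ∀ v ∈ K, ⟪f, v - u⟫ ≤ B u (v - u) := by
    intro v hv
    have hproj := hP ((1 - ρ • A) u + ρ • f) v hv
    have hstep : (1 - ρ • A) u + ρ • f - u = ρ • (f - A u) := by
      simp only [sub_apply, one_apply_eq_self, smul_apply, smul_sub]
      abel
    rw [show P ((1 - ρ • A) u + ρ • f) = u from hu, hstep, real_inner_smul_left, inner_sub_left,
      hA] at hproj
    exact sub_nonpos.1 (nonpos_of_mul_nonpos_right hproj hρ)
  exact ⟨u, ⟨huK, hVI⟩, fun u' ⟨hu'K, hu'⟩ => (hB.eq_of_forall_inner_le huK hu'K hVI hu').symm⟩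

end VariationalInequality

theorem exists_unique_solution_variationalInequality_general
    {H : Type*} [NormedAddCommGroup H] [InnerProductSpace ℝ H] [CompleteSpace H]
    (a : H →ₗ[ℝ] H →ₗ[ℝ] ℝ) (C c : ℝ) (hc : 0 < c)
    (hbound : ∀ u v : H, |a u v| ≤ C * ‖u‖ * ‖v‖)
    (hcoer : ∀ v : H, c * ‖v‖ ^ 2 ≤ a v v)
    (f : H) (K : Set H) (hK : K.Nonempty) (hKclosed : IsClosed K) (hKconv : Convex ℝ K) :
    ∃! u : H, u ∈ K ∧ ∀ v ∈ K, ⟪f, v - u⟫ ≤ a u (v - u) := by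
  let B := a.mkContinuous₂ C hbound
  have hB : IsCoercive B := ⟨c, hc, fun v => by simpa [B, sq, mul_assoc] using hcoer v⟩
  exact hB.existsUnique_variationalInequality f hK hKclosed hKconv

/-- Lions–Stampacchia theorem: for a continuous coercive symmetric bilinear form `a`
on a real Hilbert space `H`, `f ∈ H` and a nonempty closed convex set `K ⊆ H`, there is
a unique `u ∈ K` such that `a(u, v-u) ≥ ⟨f, v-u⟩` for all `v ∈ K`. -/
theorem exists_unique_solution_variationalInequality
    {H : Type*} [NormedAddCommGroup H] [InnerProductSpace ℝ H] [CompleteSpace H]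
    (a : H →ₗ[ℝ] H →ₗ[ℝ] ℝ) (C c : ℝ) (hc : 0 < c)
    (hbound : ∀ u v : H, |a u v| ≤ C * ‖u‖ * ‖v‖)
    (hsymm : ∀ u v : H, a u v = a v u)
    (hcoer : ∀ v : H, c * ‖v‖ ^ 2 ≤ a v v)
    (f : H) (K : Set H) (hK : K.Nonempty) (hKclosed : IsClosed K) (hKconv : Convex ℝ K) :
    ∃! u : H, u ∈ K ∧ ∀ v ∈ K, ⟪f, v - u⟫ ≤ a u (v - u) :=
  exists_unique_solution_variationalInequality_general a C c hc hbound hcoer f K hK hKclosed hKconv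
end

section
/- Let a be the coercive bilinear form a(u,v) = ∫_Ω(∇u·∇v + σuv)dx, ψ ∈ V with Aψ ∈ L^p(Ω), f ∈ L^p(Ω), K₀ = {v ∈ V : v ≥ ψ a.e.}, and u the unique solution of the obstacle variational inequality u ∈ K₀, a(u, v-u) ≥ ⟨f, v-u⟩ for all v ∈ K₀. Then u ≤ w a.e. in Ω for every w ∈ V satisfying w ≥ ψ a.e. in Ω, Aw ≥ f in V', and Aw ∈ L^p(Ω). -/
open MeasureTheory Set

/-- `g` is the weak gradient of `w` on `Ω`. -/
def WeakGradOn (n : ℕ) (Ω : Set (EuclideanSpace ℝ (Fin n)))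
    (w : EuclideanSpace ℝ (Fin n) → ℝ) (g : EuclideanSpace ℝ (Fin n) → EuclideanSpace ℝ (Fin n)) :
    Prop :=
  AEMeasurable g (volume.restrict Ω) ∧
    ∀ φ : EuclideanSpace ℝ (Fin n) → ℝ, ContDiff ℝ (⊤ : ℕ∞) φ → HasCompactSupport φ →
      tsupport φ ⊆ Ω → ∀ v : EuclideanSpace ℝ (Fin n),
        (∫ x in Ω, w x * fderiv ℝ φ x v) = - ∫ x in Ω, (inner ℝ (g x) v : ℝ) * φ x

/-- The bilinear form `a(u,v) = ∫_Ω (∇u·∇v + σ u v) dx` on pairs (function, gradient). -/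
noncomputable def aForm (n : ℕ) (Ω : Set (EuclideanSpace ℝ (Fin n))) (σ : ℝ)
    (v w : (EuclideanSpace ℝ (Fin n) → ℝ) × (EuclideanSpace ℝ (Fin n) → EuclideanSpace ℝ (Fin n))) :
    ℝ :=
  ∫ x in Ω, ((inner ℝ (v.2 x) (w.2 x) : ℝ) + σ * v.1 x * w.1 x)

set_option maxHeartbeats 2000000 in
/-- The solution of the obstacle variational inequality is the minimal supersolution
above the obstacle: if `u` solves the obstacle problem for `a(u,v)=∫(∇u·∇v+σuv)`,
`σ > 0`, with obstacle `ψ` and source `f ∈ L^p(Ω)`, then `u ≤ w` a.e. for every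
`w ∈ V` with `w ≥ ψ` a.e., `Aw ≥ f` in `V'` and `Aw ∈ L^p(Ω)`. -/
theorem obstacle_solution_minimal_supersolution
    {n : ℕ} (Ω : Set (EuclideanSpace ℝ (Fin n))) (σ : ℝ) (hσ : 0 < σ)
    (p : ℝ) (hp1 : 1 < p) (hp2 : 2 * n / (n + 2) ≤ p)
    (VV : Set ((EuclideanSpace ℝ (Fin n) → ℝ) × (EuclideanSpace ℝ (Fin n) → EuclideanSpace ℝ (Fin n))))
    (hVgrad : ∀ v ∈ VV, WeakGradOn n Ω v.1 v.2)
    (hVzero : ((fun _ => (0:ℝ)), (fun _ => (0:EuclideanSpace ℝ (Fin n)))) ∈ VV)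
    (hVadd : ∀ v ∈ VV, ∀ w ∈ VV, ((fun x => v.1 x + w.1 x), (fun x => v.2 x + w.2 x)) ∈ VV)
    (hVsmul : ∀ c : ℝ, ∀ v ∈ VV, ((fun x => c * v.1 x), (fun x => c • v.2 x)) ∈ VV)
    (hVpos : ∀ v ∈ VV,
      ((fun x => max (v.1 x) 0), (fun x => if 0 < v.1 x then v.2 x else 0)) ∈ VV)
    (hVL2 : ∀ v ∈ VV, IntegrableOn (fun x => (v.1 x) ^ 2) Ω ∧
      IntegrableOn (fun x => ‖v.2 x‖ ^ 2) Ω)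
    (f : EuclideanSpace ℝ (Fin n) → ℝ)
    (hf : MemLp f (ENNReal.ofReal p) (volume.restrict Ω))
    (ψ : (EuclideanSpace ℝ (Fin n) → ℝ) × (EuclideanSpace ℝ (Fin n) → EuclideanSpace ℝ (Fin n)))
    (hψV : ψ ∈ VV)
    (hAψ : ∃ h : EuclideanSpace ℝ (Fin n) → ℝ, MemLp h (ENNReal.ofReal p) (volume.restrict Ω) ∧
      ∀ v ∈ VV, aForm n Ω σ ψ v = ∫ x in Ω, h x * v.1 x)
    (u : (EuclideanSpace ℝ (Fin n) → ℝ) × (EuclideanSpace ℝ (Fin n) → EuclideanSpace ℝ (Fin n)))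
    (huV : u ∈ VV)
    (huK : ∀ᵐ x ∂volume.restrict Ω, ψ.1 x ≤ u.1 x)
    (hVI : ∀ v ∈ VV, (∀ᵐ x ∂volume.restrict Ω, ψ.1 x ≤ v.1 x) →
      (∫ x in Ω, f x * (v.1 x - u.1 x)) ≤
        aForm n Ω σ u ((fun x => v.1 x - u.1 x), (fun x => v.2 x - u.2 x)))
    (w : (EuclideanSpace ℝ (Fin n) → ℝ) × (EuclideanSpace ℝ (Fin n) → EuclideanSpace ℝ (Fin n)))
    (hwV : w ∈ VV)
    (hwK0 : ∀ᵐ x ∂volume.restrict Ω, ψ.1 x ≤ w.1 x)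
    (hwK1 : ∀ φ ∈ VV, (∀ᵐ x ∂volume.restrict Ω, 0 ≤ φ.1 x) →
      (∫ x in Ω, f x * φ.1 x) ≤ aForm n Ω σ w φ)
    (hAw : ∃ h : EuclideanSpace ℝ (Fin n) → ℝ, MemLp h (ENNReal.ofReal p) (volume.restrict Ω) ∧
      ∀ v ∈ VV, aForm n Ω σ w v = ∫ x in Ω, h x * v.1 x) :
    ∀ᵐ x ∂volume.restrict Ω, u.1 x ≤ w.1 x := by
  classical
  -- d = u - w  (as u + (-1)·w)
  have hDV : ((fun x => u.1 x + (-1) * w.1 x), (fun x => u.2 x + (-1:ℝ) • w.2 x)) ∈ VV :=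
    hVadd u huV _ (hVsmul (-1) w hwV)
  -- φ = (u - w)⁺
  have hPV : ((fun x => max (u.1 x + (-1) * w.1 x) 0),
      (fun x => if 0 < u.1 x + (-1) * w.1 x then u.2 x + (-1:ℝ) • w.2 x else 0)) ∈ VV :=
    hVpos _ hDV
  -- v = u - φ = min(u, w)
  have hV0V : ((fun x => u.1 x + (-1) * max (u.1 x + (-1) * w.1 x) 0),
      (fun x => u.2 x + (-1:ℝ) • (if 0 < u.1 x + (-1) * w.1 x then u.2 x + (-1:ℝ) • w.2 x else 0)))
      ∈ VV :=
    hVadd u huV _ (hVsmul (-1) _ hPV)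
  have hv0K : ∀ᵐ x ∂volume.restrict Ω,
      ψ.1 x ≤ u.1 x + (-1) * max (u.1 x + (-1) * w.1 x) 0 := by
    filter_upwards [huK, hwK0] with x hu hw
    rcases le_total (u.1 x + (-1) * w.1 x) 0 with h | h
    · rw [max_eq_right h]; linarith
    · rw [max_eq_left h]; linarith
  -- variational inequality with v
  have h1 : (∫ x in Ω, f x * ((u.1 x + (-1) * max (u.1 x + (-1) * w.1 x) 0) - u.1 x))
      ≤ ∫ x in Ω, ((inner ℝ (u.2 x)
          ((u.2 x + (-1:ℝ) • (if 0 < u.1 x + (-1) * w.1 x then u.2 x + (-1:ℝ) • w.2 x else 0))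
            - u.2 x) : ℝ)
        + σ * u.1 x * ((u.1 x + (-1) * max (u.1 x + (-1) * w.1 x) 0) - u.1 x)) :=
    hVI _ hV0V hv0K
  have eL : (∫ x in Ω, f x * ((u.1 x + (-1) * max (u.1 x + (-1) * w.1 x) 0) - u.1 x))
      = -∫ x in Ω, f x * max (u.1 x + (-1) * w.1 x) 0 := by
    rw [← integral_neg]
    exact integral_congr_ae (Filter.Eventually.of_forall fun x => by ring)
  have eR : (∫ x in Ω, ((inner ℝ (u.2 x)
          ((u.2 x + (-1:ℝ) • (if 0 < u.1 x + (-1) * w.1 x then u.2 x + (-1:ℝ) • w.2 x else 0))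
            - u.2 x) : ℝ)
        + σ * u.1 x * ((u.1 x + (-1) * max (u.1 x + (-1) * w.1 x) 0) - u.1 x)))
      = -∫ x in Ω, ((inner ℝ (u.2 x)
          (if 0 < u.1 x + (-1) * w.1 x then u.2 x + (-1:ℝ) • w.2 x else 0) : ℝ)
        + σ * u.1 x * max (u.1 x + (-1) * w.1 x) 0) := by
    rw [← integral_neg]
    refine integral_congr_ae (Filter.Eventually.of_forall fun x => ?_)
    dsimp only
    have hv : (u.2 x + (-1:ℝ) • (if 0 < u.1 x + (-1) * w.1 x then u.2 x + (-1:ℝ) • w.2 x else 0))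
        - u.2 x = -(if 0 < u.1 x + (-1) * w.1 x then u.2 x + (-1:ℝ) • w.2 x else 0) := by
      module
    rw [hv, inner_neg_right]
    ring
  rw [eL, eR] at h1
  have key1 : (∫ x in Ω, ((inner ℝ (u.2 x)
          (if 0 < u.1 x + (-1) * w.1 x then u.2 x + (-1:ℝ) • w.2 x else 0) : ℝ)
        + σ * u.1 x * max (u.1 x + (-1) * w.1 x) 0))
      ≤ ∫ x in Ω, f x * max (u.1 x + (-1) * w.1 x) 0 := by linarith
  -- supersolution tested with φ
  have h2 : (∫ x in Ω, f x * max (u.1 x + (-1) * w.1 x) 0)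
      ≤ ∫ x in Ω, ((inner ℝ (w.2 x)
          (if 0 < u.1 x + (-1) * w.1 x then u.2 x + (-1:ℝ) • w.2 x else 0) : ℝ)
        + σ * w.1 x * max (u.1 x + (-1) * w.1 x) 0) :=
    hwK1 _ hPV (Filter.Eventually.of_forall fun x => le_max_right _ _)
  -- ae-measurability of first components
  have hmeas1 : ∀ v ∈ VV, AEMeasurable v.1 (volume.restrict Ω) := by
    intro v hv
    have hnn : ∀ m ∈ VV, (∀ x, 0 ≤ m.1 x) → AEMeasurable m.1 (volume.restrict Ω) := by
      intro m hm hmnn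
      have hsq : AEMeasurable (fun x => (m.1 x) ^ 2) (volume.restrict Ω) :=
        (hVL2 m hm).1.aestronglyMeasurable.aemeasurable
      have hs : AEMeasurable (fun x => Real.sqrt ((m.1 x) ^ 2)) (volume.restrict Ω) :=
        Real.continuous_sqrt.measurable.comp_aemeasurable hsq
      refine hs.congr (Filter.Eventually.of_forall fun x => ?_)
      dsimp only
      rw [Real.sqrt_sq_eq_abs, abs_of_nonneg (hmnn x)]
    have hP := hnn _ (hVpos v hv) (fun x => le_max_right _ _)
    have hN := hnn _ (hVpos _ (hVsmul (-1) v hv)) (fun x => le_max_right _ _)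
    refine (hP.sub hN).congr (Filter.Eventually.of_forall fun x => ?_)
    simp only [Pi.sub_apply]
    rcases le_total (v.1 x) 0 with h | h
    · rw [max_eq_right h, max_eq_left (by linarith)]; ring
    · rw [max_eq_left h, max_eq_right (by linarith)]; ring
  have hMmeas : AEMeasurable (fun x => max (u.1 x + (-1) * w.1 x) 0) (volume.restrict Ω) :=
    hmeas1 _ hPV
  have hQmeas : AEMeasurable
      (fun x => if 0 < u.1 x + (-1) * w.1 x then u.2 x + (-1:ℝ) • w.2 x else 0)
      (volume.restrict Ω) := (hVgrad _ hPV).1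
  -- integrabilities
  have iM2 : Integrable (fun x => (max (u.1 x + (-1) * w.1 x) 0) ^ 2) (volume.restrict Ω) :=
    (hVL2 _ hPV).1
  have iQ2 : Integrable
      (fun x => ‖(if 0 < u.1 x + (-1) * w.1 x then u.2 x + (-1:ℝ) • w.2 x else 0 :
        EuclideanSpace ℝ (Fin n))‖ ^ 2) (volume.restrict Ω) :=
    (hVL2 _ hPV).2
  have iw1 : Integrable (fun x => (w.1 x) ^ 2) (volume.restrict Ω) := (hVL2 w hwV).1
  have iw2 : Integrable (fun x => ‖w.2 x‖ ^ 2) (volume.restrict Ω) := (hVL2 w hwV).2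
  have iB2 : Integrable (fun x => (inner ℝ (w.2 x)
      (if 0 < u.1 x + (-1) * w.1 x then u.2 x + (-1:ℝ) • w.2 x else 0) : ℝ))
      (volume.restrict Ω) := by
    have ibound : Integrable (fun x => (‖w.2 x‖ ^ 2
        + ‖(if 0 < u.1 x + (-1) * w.1 x then u.2 x + (-1:ℝ) • w.2 x else 0 :
          EuclideanSpace ℝ (Fin n))‖ ^ 2) / 2) (volume.restrict Ω) :=
      (iw2.add iQ2).div_const 2
    refine Integrable.mono' ibound (((hVgrad w hwV).1.inner hQmeas).aestronglyMeasurable)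
      (Filter.Eventually.of_forall fun x => ?_)
    rw [Real.norm_eq_abs]
    calc |(inner ℝ (w.2 x)
        (if 0 < u.1 x + (-1) * w.1 x then u.2 x + (-1:ℝ) • w.2 x else 0) : ℝ)|
        ≤ ‖w.2 x‖ * ‖(if 0 < u.1 x + (-1) * w.1 x then u.2 x + (-1:ℝ) • w.2 x else 0 :
          EuclideanSpace ℝ (Fin n))‖ := abs_real_inner_le_norm _ _
      _ ≤ (‖w.2 x‖ ^ 2 + ‖(if 0 < u.1 x + (-1) * w.1 x then u.2 x + (-1:ℝ) • w.2 x else 0 :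
          EuclideanSpace ℝ (Fin n))‖ ^ 2) / 2 := by
          nlinarith [sq_nonneg (‖w.2 x‖ - ‖(if 0 < u.1 x + (-1) * w.1 x then
            u.2 x + (-1:ℝ) • w.2 x else 0 : EuclideanSpace ℝ (Fin n))‖)]
  have iB1 : Integrable (fun x => w.1 x * max (u.1 x + (-1) * w.1 x) 0)
      (volume.restrict Ω) := by
    have ibound : Integrable (fun x => ((w.1 x) ^ 2
        + (max (u.1 x + (-1) * w.1 x) 0) ^ 2) / 2) (volume.restrict Ω) :=
      (iw1.add iM2).div_const 2
    refine Integrable.mono' ibound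
      (((hmeas1 w hwV).mul hMmeas).aestronglyMeasurable)
      (Filter.Eventually.of_forall fun x => ?_)
    rw [Real.norm_eq_abs, abs_mul]
    nlinarith [sq_abs (w.1 x), sq_abs (max (u.1 x + (-1) * w.1 x) 0),
      sq_nonneg (|w.1 x| - |max (u.1 x + (-1) * w.1 x) 0|),
      abs_nonneg (w.1 x), abs_nonneg (max (u.1 x + (-1) * w.1 x) 0)]
  have iB : Integrable (fun x => (inner ℝ (w.2 x)
      (if 0 < u.1 x + (-1) * w.1 x then u.2 x + (-1:ℝ) • w.2 x else 0) : ℝ)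
      + σ * w.1 x * max (u.1 x + (-1) * w.1 x) 0) (volume.restrict Ω) := by
    refine iB2.add ((iB1.const_mul σ).congr
      (Filter.Eventually.of_forall fun x => ?_))
    ring
  have iC : Integrable (fun x =>
      ‖(if 0 < u.1 x + (-1) * w.1 x then u.2 x + (-1:ℝ) • w.2 x else 0 :
        EuclideanSpace ℝ (Fin n))‖ ^ 2
      + σ * (max (u.1 x + (-1) * w.1 x) 0) ^ 2) (volume.restrict Ω) :=
    iQ2.add (iM2.const_mul σ)
  -- splitting a(u,φ) = a(w,φ) + ∫ (‖∇φ‖² + σφ²)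
  have hsplit : (∫ x in Ω, ((inner ℝ (u.2 x)
          (if 0 < u.1 x + (-1) * w.1 x then u.2 x + (-1:ℝ) • w.2 x else 0) : ℝ)
        + σ * u.1 x * max (u.1 x + (-1) * w.1 x) 0))
      = (∫ x in Ω, ((inner ℝ (w.2 x)
          (if 0 < u.1 x + (-1) * w.1 x then u.2 x + (-1:ℝ) • w.2 x else 0) : ℝ)
        + σ * w.1 x * max (u.1 x + (-1) * w.1 x) 0))
      + ∫ x in Ω, (‖(if 0 < u.1 x + (-1) * w.1 x then u.2 x + (-1:ℝ) • w.2 x else 0 :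
          EuclideanSpace ℝ (Fin n))‖ ^ 2
        + σ * (max (u.1 x + (-1) * w.1 x) 0) ^ 2) := by
    rw [← integral_add iB iC]
    refine integral_congr_ae (Filter.Eventually.of_forall fun x => ?_)
    dsimp only
    by_cases h : 0 < u.1 x + (-1) * w.1 x
    · simp only [if_pos h]
      rw [max_eq_left (by linarith)]
      have e2 : (inner ℝ (u.2 x) (u.2 x + (-1:ℝ) • w.2 x) : ℝ)
          = inner ℝ (w.2 x) (u.2 x + (-1:ℝ) • w.2 x) + ‖u.2 x + (-1:ℝ) • w.2 x‖ ^ 2 := by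
        rw [← real_inner_self_eq_norm_sq, ← inner_add_left]
        congr 1
        module
      rw [e2]; ring
    · simp only [if_neg h]
      rw [max_eq_right (by linarith)]
      simp
  -- conclude ∫ (‖∇φ‖² + σφ²) ≤ 0
  have hC0 : (∫ x in Ω, (‖(if 0 < u.1 x + (-1) * w.1 x then u.2 x + (-1:ℝ) • w.2 x else 0 :
        EuclideanSpace ℝ (Fin n))‖ ^ 2
      + σ * (max (u.1 x + (-1) * w.1 x) 0) ^ 2)) ≤ 0 := by linarith
  have hCsplit : (∫ x in Ω, (‖(if 0 < u.1 x + (-1) * w.1 x then u.2 x + (-1:ℝ) • w.2 x else 0 :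
        EuclideanSpace ℝ (Fin n))‖ ^ 2
      + σ * (max (u.1 x + (-1) * w.1 x) 0) ^ 2))
      = (∫ x in Ω, ‖(if 0 < u.1 x + (-1) * w.1 x then u.2 x + (-1:ℝ) • w.2 x else 0 :
        EuclideanSpace ℝ (Fin n))‖ ^ 2)
      + σ * ∫ x in Ω, (max (u.1 x + (-1) * w.1 x) 0) ^ 2 := by
    rw [integral_add iQ2 (iM2.const_mul σ), integral_const_mul]
  have hQnonneg : 0 ≤ ∫ x in Ω, ‖(if 0 < u.1 x + (-1) * w.1 x then u.2 x + (-1:ℝ) • w.2 x else 0 :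
      EuclideanSpace ℝ (Fin n))‖ ^ 2 :=
    integral_nonneg fun x => sq_nonneg _
  have hMnonneg : 0 ≤ ∫ x in Ω, (max (u.1 x + (-1) * w.1 x) 0) ^ 2 :=
    integral_nonneg fun x => sq_nonneg _
  have hMzero : (∫ x in Ω, (max (u.1 x + (-1) * w.1 x) 0) ^ 2) = 0 := by nlinarith
  have hae : (fun x => (max (u.1 x + (-1) * w.1 x) 0) ^ 2) =ᵐ[volume.restrict Ω] 0 :=
    (integral_eq_zero_iff_of_nonneg (fun x => sq_nonneg _) iM2).mp hMzero
  filter_upwards [hae] with x hx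
  have hx' : (max (u.1 x + (-1) * w.1 x) 0) ^ 2 = 0 := hx
  have hm : max (u.1 x + (-1) * w.1 x) 0 = 0 := by
    nlinarith [le_max_right (u.1 x + (-1) * w.1 x) (0:ℝ)]
  have := le_max_left (u.1 x + (-1) * w.1 x) (0:ℝ)
  linarith [hm ▸ this]
end

section
/- Let a be a coercive continuous symmetric bilinear form on V with operator A, ψ ∈ V, f̂ := Aψ, f ∈ V', and K₁ = {v ∈ V : Av ≥ f in V'}. Then u satisfies the complementarity conditions (u ≥ ψ a.e., Au ≥ f in V', ⟨Au - f, u - ψ⟩ = 0) if and only if u ∈ K₁ and a(u, v - u) ≥ ⟨f̂, v - u⟩ for all v ∈ K₁. -/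
/-!
By symmetry, `a(u, v - u) - a(ψ, v - u) = a(v, u - ψ) - a(u, u - ψ)`, so the variational
inequality at `v` says exactly `a(u, u - ψ) ≤ a(v, u - ψ)`. If `u - ψ ≥ 0` and
`a(u, u - ψ) = f(u - ψ)`, this holds for every supersolution `v`. Conversely, testing with
the supersolution `v = A⁻¹f` gives the complementarity equality, and testing with `u + A⁻¹g`,
where `g` is a functional separating `u - ψ` from the closed convex cone `P`, shows
`u - ψ ∈ P`.
-/

def ProperCone.ofConvex {E : Type*} [AddCommGroup E] [Module ℝ E] [TopologicalSpace E]
    (P : Set E) (hP0 : (0 : E) ∈ P) (hPclosed : IsClosed P) (hPconv : Convex ℝ P)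
    (hPcone : ∀ t : ℝ, 0 ≤ t → ∀ v ∈ P, t • v ∈ P) : ProperCone ℝ E where
  carrier := P
  zero_mem' := hP0
  add_mem' {x y} hx hy := by
    have hmid : (1 / 2 : ℝ) • x + (1 / 2 : ℝ) • y ∈ P := hPconv hx hy (by norm_num) (by norm_num)
      (by norm_num)
    simpa [smul_add, smul_smul] using hPcone 2 zero_le_two _ hmid
  smul_mem' t x hx := hPcone t t.2 x hx
  isClosed' := hPclosed

/-- The set `K₁ = {v : Av ≥ f}` of supersolutions, the order on `V'` being the one dual to `P`. -/
def supersolutions {R M : Type*} [CommSemiring R] [LE R] [AddCommMonoid M] [Module R M]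
    (a : M →ₗ[R] M →ₗ[R] R) (P : Set M) (f : M → R) : Set M :=
  {v | ∀ φ ∈ P, f φ ≤ a v φ}

section Algebraic

variable {R M : Type*} [CommRing R] [PartialOrder R] [IsOrderedRing R] [AddCommGroup M]
  [Module R M] {a : M →ₗ[R] M →ₗ[R] R}

theorem dualVI_apply_iff (hsymm : ∀ u v : M, a u v = a v u) (ψ u v : M) :
    a ψ (v - u) ≤ a u (v - u) ↔ a u (u - ψ) ≤ a v (u - ψ) := by
  have key : a u (v - u) - a ψ (v - u) = a v (u - ψ) - a u (u - ψ) := by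
    rw [← LinearMap.sub_apply, ← map_sub, hsymm, ← LinearMap.sub_apply, ← map_sub]
  rw [← sub_nonneg, key, sub_nonneg]

theorem dualVI_of_complementarity (hsymm : ∀ u v : M, a u v = a v u) {P : Set M} {f : M → R}
    {ψ u : M} (hmem : u - ψ ∈ P) (heq : a u (u - ψ) = f (u - ψ)) :
    ∀ v ∈ supersolutions a P f, a ψ (v - u) ≤ a u (v - u) := fun v hv =>
  (dualVI_apply_iff hsymm ψ u v).2 (heq.trans_le (hv _ hmem))

theorem add_mem_supersolutions {P : Set M} {f : M → R} {v w : M}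
    (hv : v ∈ supersolutions a P f) (hw : ∀ φ ∈ P, 0 ≤ a w φ) :
    v + w ∈ supersolutions a P f := fun φ hφ => by
  rw [map_add, LinearMap.add_apply]
  exact le_add_of_le_of_nonneg (hv φ hφ) (hw φ hφ)

theorem complementarity_eq_of_dualVI (hsymm : ∀ u v : M, a u v = a v u) {P : Set M}
    {f : M → R} {ψ u w : M} (hw : ∀ φ, a w φ = f φ) (hmem : u - ψ ∈ P)
    (hu : u ∈ supersolutions a P f)
    (hVI : ∀ v ∈ supersolutions a P f, a ψ (v - u) ≤ a u (v - u)) :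
    a u (u - ψ) = f (u - ψ) := by
  have hsuper : w ∈ supersolutions a P f := fun φ _ => (hw φ).ge
  refine le_antisymm ?_ (hu _ hmem)
  simpa only [hw] using (dualVI_apply_iff hsymm ψ u w).1 (hVI w hsuper)

end Algebraic

section Topological

variable {E : Type*} [TopologicalSpace E] [AddCommGroup E] [IsTopologicalAddGroup E]
  [Module ℝ E] [ContinuousSMul ℝ E] [LocallyConvexSpace ℝ E] {a : E →ₗ[ℝ] E →ₗ[ℝ] ℝ}

theorem sub_mem_of_dualVI (hsymm : ∀ u v : E, a u v = a v u) (C : ProperCone ℝ E)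
    (hAsurj : ∀ g : StrongDual ℝ E, ∃ w : E, ∀ φ : E, a w φ = g φ) {f : E → ℝ} {ψ u : E}
    (hu : u ∈ supersolutions a C f)
    (hVI : ∀ v ∈ supersolutions a C f, a ψ (v - u) ≤ a u (v - u)) :
    u - ψ ∈ C := by
  by_contra hnot
  obtain ⟨g, hgC, hg⟩ := C.hyperplane_separation_point hnot
  obtain ⟨w, hw⟩ := hAsurj g
  have hsuper : u + w ∈ supersolutions a C f :=
    add_mem_supersolutions hu fun φ hφ => (hw φ).symm ▸ hgC φ hφ
  have hineq := (dualVI_apply_iff hsymm ψ u (u + w)).1 (hVI _ hsuper)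
  rw [map_add, LinearMap.add_apply, hw] at hineq
  linarith

end Topological

open RealInnerProductSpace

theorem complementarity_iff_dualVI_general
    {V : Type*} [NormedAddCommGroup V] [InnerProductSpace ℝ V]
    (a : V →ₗ[ℝ] V →ₗ[ℝ] ℝ)
    (hsymm : ∀ u v : V, a u v = a v u)
    (P : Set V) (hP0 : (0 : V) ∈ P) (hPclosed : IsClosed P) (hPconv : Convex ℝ P)
    (hPcone : ∀ t : ℝ, 0 ≤ t → ∀ v ∈ P, t • v ∈ P)
    (hAsurj : ∀ g : V →L[ℝ] ℝ, ∃ w : V, ∀ φ : V, a w φ = g φ)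
    (f : V →L[ℝ] ℝ) (ψ u : V) :
    (u - ψ ∈ P ∧ (∀ φ ∈ P, f φ ≤ a u φ) ∧ a u (u - ψ) = f (u - ψ)) ↔
      ((∀ φ ∈ P, f φ ≤ a u φ) ∧
        ∀ v : V, (∀ φ ∈ P, f φ ≤ a v φ) → a ψ (v - u) ≤ a u (v - u)) := by
  constructor
  · rintro ⟨hmem, hu, heq⟩
    exact ⟨hu, dualVI_of_complementarity hsymm hmem heq⟩
  · rintro ⟨hu, hVI⟩
    have hmem : u - ψ ∈ P :=
      sub_mem_of_dualVI hsymm (.ofConvex P hP0 hPclosed hPconv hPcone) hAsurj hu hVI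
    obtain ⟨w, hw⟩ := hAsurj f
    exact ⟨hmem, hu, complementarity_eq_of_dualVI hsymm hw hmem hu hVI⟩

/-- Equivalence of the complementarity formulation of the obstacle problem with the
"dual" variational inequality over the set `K₁` of supersolutions.  `V` is a real
Hilbert space, `P` the closed convex cone of a.e. nonnegative elements (assumed
self-dual), `a` a continuous coercive symmetric bilinear form whose associated
operator `A : V → V'` (`⟨Av, φ⟩ = a(v,φ)`) is surjective, `f ∈ V'`, `ψ ∈ V`, and
`f̂ := Aψ`, i.e. `⟨f̂, φ⟩ = a(ψ, φ)`.  Then `u` satisfies `u ≥ ψ`, `Au ≥ f` in `V'`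
and `⟨Au - f, u - ψ⟩ = 0` iff `u ∈ K₁ = {v : Av ≥ f}` and
`a(u, v-u) ≥ ⟨f̂, v-u⟩` for all `v ∈ K₁`. -/
theorem complementarity_iff_dualVI
    {V : Type*} [NormedAddCommGroup V] [InnerProductSpace ℝ V] [CompleteSpace V]
    (a : V →ₗ[ℝ] V →ₗ[ℝ] ℝ) (C c : ℝ) (hc : 0 < c)
    (hbound : ∀ u v : V, |a u v| ≤ C * ‖u‖ * ‖v‖)
    (hsymm : ∀ u v : V, a u v = a v u)
    (hcoer : ∀ v : V, c * ‖v‖ ^ 2 ≤ a v v)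
    (P : Set V) (hP0 : (0 : V) ∈ P) (hPclosed : IsClosed P) (hPconv : Convex ℝ P)
    (hPcone : ∀ t : ℝ, 0 ≤ t → ∀ v ∈ P, t • v ∈ P)
    (hPselfdual : ∀ w : V, (∀ φ ∈ P, 0 ≤ ⟪φ, w⟫) → w ∈ P)
    (hAsurj : ∀ g : V →L[ℝ] ℝ, ∃ w : V, ∀ φ : V, a w φ = g φ)
    (f : V →L[ℝ] ℝ) (ψ u : V) :
    (u - ψ ∈ P ∧ (∀ φ ∈ P, f φ ≤ a u φ) ∧ a u (u - ψ) = f (u - ψ)) ↔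
      ((∀ φ ∈ P, f φ ≤ a u φ) ∧
        ∀ v : V, (∀ φ ∈ P, f φ ≤ a v φ) → a ψ (v - u) ≤ a u (v - u)) :=
  complementarity_iff_dualVI_general a hsymm P hP0 hPclosed hPconv hPcone hAsurj f ψ u
end
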